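/- For all real x ≠ 0, 2·x/(sinh x) + x/(tanh x) > 3. -/

import Mathlib

/-!
Clearing the positive denominator `sinh x`, the inequality for `x > 0` reads
`3 sinh x < x (2 + cosh x)`. The difference of the two sides vanishes at `0`, and so does each
of its first two derivatives `2 + x sinh x - 2 cosh x` and `x cosh x - sinh x`, while the third
derivative `x sinh x` is positive for `x > 0`; three monotonicity steps give the inequality.
The left-hand side of the theorem is even in `x`, which covers `x < 0`.
-/

open Real Set

lemma pos_of_hasDerivAt_of_pos {f f' : ℝ → ℝ} (hf : ∀ y, HasDerivAt f (f' y) y) (h0 : f 0 = 0)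
    (hf' : ∀ y, 0 < y → 0 < f' y) {x : ℝ} (hx : 0 < x) : 0 < f x := by
  have hmono : StrictMonoOn f (Ici 0) := by
    refine strictMonoOn_of_deriv_pos (convex_Ici 0)
      (fun y _ => (hf y).continuousAt.continuousWithinAt) fun y hy => ?_
    rw [interior_Ici] at hy
    exact (hf y).deriv ▸ hf' y hy
  simpa [h0] using hmono self_mem_Ici hx.le hx

lemma Real.sinh_lt_mul_cosh {x : ℝ} (hx : 0 < x) : sinh x < x * cosh x := by
  have hderiv (y : ℝ) : HasDerivAt (fun y => y * cosh y - sinh y) (y * sinh y) y :=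
    (((hasDerivAt_id' y).mul (hasDerivAt_cosh y)).sub (hasDerivAt_sinh y)).congr_deriv (by ring)
  have := pos_of_hasDerivAt_of_pos hderiv (by simp)
    (fun y hy => mul_pos hy (sinh_pos_iff.2 hy)) hx
  linarith

lemma Real.two_mul_cosh_lt {x : ℝ} (hx : 0 < x) : 2 * cosh x < 2 + x * sinh x := by
  have hderiv (y : ℝ) :
      HasDerivAt (fun y => 2 + y * sinh y - 2 * cosh y) (y * cosh y - sinh y) y :=
    ((((hasDerivAt_id' y).mul (hasDerivAt_sinh y)).const_add 2).sub
      ((hasDerivAt_cosh y).const_mul 2)).congr_deriv (by ring)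
  have := pos_of_hasDerivAt_of_pos hderiv (by simp)
    (fun y hy => sub_pos.2 (sinh_lt_mul_cosh hy)) hx
  linarith

lemma Real.three_mul_sinh_lt {x : ℝ} (hx : 0 < x) : 3 * sinh x < x * (2 + cosh x) := by
  have hderiv (y : ℝ) : HasDerivAt (fun y => y * (2 + cosh y) - 3 * sinh y)
      (2 + y * sinh y - 2 * cosh y) y :=
    (((hasDerivAt_id' y).mul ((hasDerivAt_cosh y).const_add 2)).sub
      ((hasDerivAt_sinh y).const_mul 3)).congr_deriv (by ring)
  have := pos_of_hasDerivAt_of_pos hderiv (by simp)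
    (fun y hy => sub_pos.2 (two_mul_cosh_lt hy)) hx
  linarith

lemma huygens_sum_eq (x : ℝ) :
    2 * (x / sinh x) + x / tanh x = x * (2 + cosh x) / sinh x := by
  rw [tanh_eq_sinh_div_cosh, div_div_eq_mul_div]
  ring

lemma huygens_sum_neg (x : ℝ) :
    2 * (-x / sinh (-x)) + -x / tanh (-x) = 2 * (x / sinh x) + x / tanh x := by
  simp only [sinh_neg, tanh_neg, neg_div_neg_eq]

lemma three_lt_huygens_sum_of_pos {x : ℝ} (hx : 0 < x) :
    3 < 2 * (x / sinh x) + x / tanh x := by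
  rw [huygens_sum_eq, lt_div_iff₀ (sinh_pos_iff.2 hx)]
  exact three_mul_sinh_lt hx

theorem refined_huygens_hyperbolic_second (x : ℝ) (hx : x ≠ 0) :
    2 * (x / Real.sinh x) + x / Real.tanh x > 3 := by
  rcases hx.lt_or_gt with hneg | hpos
  · simpa only [huygens_sum_neg] using three_lt_huygens_sum_of_pos (neg_pos.2 hneg)
  · exact three_lt_huygens_sum_of_pos hpos
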